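/- arXiv:0903.2575 — 2 statements merged into one kernel-verified Lean document; each statement's English description precedes it below -/
import Mathlib

section
/- In a cobweb poset with level sequence F, the Möbius function satisfies: for x ∈ Φ_r and y ∈ Φ_s with r < s, μ(x,y) = (-1)^{s-r} · ∏_{i=r+1}^{s-1} (i_F - 1), and μ(x,x) = 1. -/
/-- The cobweb poset with level sequence `F`, truncated to levels `0,…,n-1`:
level `k` has `F k` elements, and `x ≤ y` iff `x = y` or `x` lies on a strictly
lower level than `y`. -/
def Cobweb (F : ℕ → ℕ) (n : ℕ) := Σ k : Fin n, Fin (F k)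

namespace Cobweb

variable {F : ℕ → ℕ} {n : ℕ}

instance : Fintype (Cobweb F n) := inferInstanceAs (Fintype (Σ k : Fin n, Fin (F k)))
instance : DecidableEq (Cobweb F n) := inferInstanceAs (DecidableEq (Σ k : Fin n, Fin (F k)))

/-- The level (rank) of an element of the cobweb poset. -/
def lvl (x : Cobweb F n) : ℕ := (show Σ k : Fin n, Fin (F k) from x).fst

instance : PartialOrder (Cobweb F n) where
  le x y := x = y ∨ x.lvl < y.lvl
  le_refl x := Or.inl rfl
  le_trans a b c hab hbc := by
    rcases hab with rfl | h
    · exact hbc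
    · rcases hbc with rfl | h'
      · exact Or.inr h
      · exact Or.inr (h.trans h')
  le_antisymm a b hab hba := by
    rcases hab with rfl | h
    · rfl
    · rcases hba with rfl | h'
      · rfl
      · exact absurd (h.trans h') (lt_irrefl _)

instance : DecidableRel (α := Cobweb F n) (· ≤ ·) :=
  fun x y => decidable_of_iff (x = y ∨ x.lvl < y.lvl) Iff.rfl

instance : DecidableRel (α := Cobweb F n) (· < ·) :=
  fun x y => decidable_of_iff (x ≤ y ∧ ¬ y ≤ x) lt_iff_le_not_ge.symm

end Cobweb

/-! The order only sees levels, so the recursion for `μ(x, y)` becomes a recursion in the levels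
`r < s` alone: `g(r, s) = -(1 + ∑_{r<i<s} i_F · g(r, i))`, each level `i` contributing `i_F` equal
terms. The closed form satisfies it because `g(r, s + 1) = -(s_F - 1) · g(r, s)`: moving the top
from `s` to `s + 1` adds the `s_F` terms `g(r, s)` to the sum. -/

open Finset

def cobwebMobius (F : ℕ → ℕ) (r s : ℕ) : ℤ :=
  (-1) ^ (s - r) * ∏ i ∈ Ioo r s, ((F i : ℤ) - 1)

theorem cobwebMobius_succ (F : ℕ → ℕ) {r s : ℕ} (hrs : r < s) :
    cobwebMobius F r (s + 1) = -((F s : ℤ) - 1) * cobwebMobius F r s := by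
  rw [cobwebMobius, cobwebMobius, Ioo_add_one_right_eq_Ioc, ← Ioo_insert_right hrs,
    prod_insert (by simp), Nat.sub_add_comm hrs.le, pow_succ]
  ring

theorem cobwebMobius_eq_neg_one_add_sum (F : ℕ → ℕ) {r s : ℕ} (hrs : r < s) :
    cobwebMobius F r s = -(1 + ∑ i ∈ Ioo r s, (F i : ℤ) * cobwebMobius F r i) := by
  induction s, hrs using Nat.le_induction with
  | base => simp [cobwebMobius, Ioo_add_one_right_eq_Ioc]
  | succ s hrs ih =>
    rw [cobwebMobius_succ F hrs, Ioo_add_one_right_eq_Ioc, ← Ioo_insert_right hrs,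
      sum_insert (by simp)]
    linear_combination ih

namespace Cobweb

variable {F : ℕ → ℕ} {n : ℕ}

theorem le_iff_eq_or_lvl_lt {x y : Cobweb F n} : x ≤ y ↔ x = y ∨ x.lvl < y.lvl := Iff.rfl

theorem lt_iff_lvl_lt {x y : Cobweb F n} : x < y ↔ x.lvl < y.lvl := by
  rw [lt_iff_le_and_ne, le_iff_eq_or_lvl_lt]
  constructor
  · rintro ⟨rfl | h, hne⟩
    · exact absurd rfl hne
    · exact h
  · exact fun h => ⟨Or.inr h, by rintro rfl; exact lt_irrefl _ h⟩

theorem lvl_lt (x : Cobweb F n) : x.lvl < n := x.1.isLt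

theorem sum_lvl {M : Type*} [AddCommMonoid M] (g : ℕ → M) :
    ∑ z : Cobweb F n, g z.lvl = ∑ i ∈ range n, F i • g i := by
  rw [← Fin.sum_univ_eq_sum_range (fun i => F i • g i)]
  exact (Fintype.sum_sigma (fun z : Σ k : Fin n, Fin (F k) => g z.1)).trans
    (Fintype.sum_congr _ _ fun k => by simp)

theorem sum_filter_lvl_mem {M : Type*} [AddCommMonoid M] {I : Finset ℕ}
    (hI : ∀ i ∈ I, i < n) (g : ℕ → M) :
    ∑ z : Cobweb F n with z.lvl ∈ I, g z.lvl = ∑ i ∈ I, F i • g i := by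
  rw [sum_filter, sum_lvl fun i => if i ∈ I then g i else 0]
  simp only [smul_ite, smul_zero]
  rw [sum_ite_mem, inter_eq_right.mpr fun i hi => mem_range.mpr (hI i hi)]

theorem filter_Ico_eq_insert {x y : Cobweb F n} (hxy : x.lvl < y.lvl) :
    univ.filter (fun z : Cobweb F n => x ≤ z ∧ z < y) =
      insert x (univ.filter fun z => z.lvl ∈ Ioo x.lvl y.lvl) := by
  ext z
  simp only [mem_insert, mem_filter, mem_univ, true_and, mem_Ioo, le_iff_eq_or_lvl_lt,
    lt_iff_lvl_lt]
  constructor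
  · rintro ⟨rfl | h, h'⟩
    · exact Or.inl rfl
    · exact Or.inr ⟨h, h'⟩
  · rintro (rfl | ⟨h, h'⟩)
    · exact ⟨Or.inl rfl, hxy⟩
    · exact ⟨Or.inr h, h'⟩

end Cobweb

theorem stmt6_general (F : ℕ → ℕ) (n : ℕ)
    (mu : Cobweb F n → Cobweb F n → ℤ)
    (hrefl : ∀ x, mu x x = 1)
    (hrec : ∀ x y : Cobweb F n, x < y →
      mu x y = -∑ z ∈ Finset.univ.filter (fun z => x ≤ z ∧ z < y), mu x z) :
    ∀ x y : Cobweb F n, x.lvl < y.lvl →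
      mu x y = (-1) ^ (y.lvl - x.lvl) *
        ∏ i ∈ Finset.Ioo x.lvl y.lvl, ((F i : ℤ) - 1) := by
  intro x y
  induction y using WellFoundedLT.induction with
  | _ y ih =>
  intro hxy
  have hmid : ∀ z ∈ univ.filter (fun z : Cobweb F n => z.lvl ∈ Ioo x.lvl y.lvl),
      mu x z = cobwebMobius F x.lvl z.lvl := fun z hz => by
    obtain ⟨hxz, hzy⟩ := mem_Ioo.mp (mem_filter.mp hz).2
    exact ih z (Cobweb.lt_iff_lvl_lt.mpr hzy) hxz
  rw [hrec x y (Cobweb.lt_iff_lvl_lt.mpr hxy), Cobweb.filter_Ico_eq_insert hxy,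
    sum_insert (by simp), hrefl, sum_congr rfl hmid,
    Cobweb.sum_filter_lvl_mem (fun i hi => (mem_Ioo.mp hi).2.trans y.lvl_lt)]
  simp only [nsmul_eq_mul]
  exact (cobwebMobius_eq_neg_one_add_sum F hxy).symm

theorem stmt6 (F : ℕ → ℕ) (hF : ∀ k, 0 < F k) (n : ℕ)
    (mu : Cobweb F n → Cobweb F n → ℤ)
    (hrefl : ∀ x, mu x x = 1)
    (hrec : ∀ x y : Cobweb F n, x < y →
      mu x y = -∑ z ∈ Finset.univ.filter (fun z => x ≤ z ∧ z < y), mu x z) :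
    ∀ x y : Cobweb F n, x.lvl < y.lvl →
      mu x y = (-1) ^ (y.lvl - x.lvl) *
        ∏ i ∈ Finset.Ioo x.lvl y.lvl, ((F i : ℤ) - 1) :=
  stmt6_general F n mu hrefl hrec
end

section
/- For the cobweb poset denominated by F = N (the natural numbers, so level k has k elements, k ≥ 1), the Möbius function value between an element of level r and an element of level s > r+1 is μ = (-1)^{s-r} ∏_{i=r+1}^{s-1}(i-1) = (-1)^{s-r} · (s-2)!/(r-1)! for r ≥ 1. -/
open Finset

private def gaux (r t : ℕ) : ℤ := (-1)^(t-r) * ∏ i ∈ Finset.Ioo r t, ((i:ℤ)-1)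

private lemma Ioo_succ_insert (r s : ℕ) (h : r < s) :
    Finset.Ioo r (s+1) = insert s (Finset.Ioo r s) := by
  ext k; simp only [mem_Ioo, mem_insert]; omega

private lemma gaux_succ (r s : ℕ) (h : r < s) : gaux r (s+1) = (1 - (s:ℤ)) * gaux r s := by
  unfold gaux
  rw [Ioo_succ_insert r s h, Finset.prod_insert (by simp), show s + 1 - r = (s - r) + 1 by omega,
    pow_succ]
  ring

private lemma arith (r : ℕ) : ∀ s, r + 1 ≤ s →
    gaux r s = -(1 + ∑ t ∈ Finset.Ioo r s, (t:ℤ) * gaux r t) := by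
  intro s hs
  induction s, hs using Nat.le_induction with
  | base =>
    have : Finset.Ioo r (r+1) = ∅ := by ext k; simp only [mem_Ioo, notMem_empty, iff_false]; omega
    simp [gaux, this]
  | succ s hs ih =>
    rw [Ioo_succ_insert r s hs, Finset.sum_insert (by simp), gaux_succ r s hs]
    have h2 : ∑ t ∈ Finset.Ioo r s, (t:ℤ) * gaux r t = -1 - gaux r s := by linarith [ih]
    rw [h2]; ring

private lemma fact_prod (r : ℕ) (hr : 1 ≤ r) : ∀ s, r + 1 ≤ s →
    ((r-1).factorial : ℤ) * ∏ i ∈ Finset.Ioo r s, ((i:ℤ)-1) = ((s-2).factorial : ℤ) := by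
  intro s hs
  induction s, hs using Nat.le_induction with
  | base =>
    have : Finset.Ioo r (r+1) = ∅ := by ext k; simp only [mem_Ioo, notMem_empty, iff_false]; omega
    rw [this]
    simp [show r + 1 - 2 = r - 1 by omega]
  | succ s hs ih =>
    rw [Ioo_succ_insert r s hs, Finset.prod_insert (by simp), show s + 1 - 2 = (s - 2) + 1 by omega,
      Nat.factorial_succ]
    have : ((s:ℤ) - 1) = ((s - 2 : ℕ) : ℤ) + 1 := by push_cast; omega
    rw [← mul_assoc, mul_comm _ ((s:ℤ)-1), mul_assoc, ih, this]
    push_cast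
    ring

private lemma lvl_pos {n : ℕ} (x : Cobweb (fun k => k) n) : 1 ≤ Cobweb.lvl x := x.2.pos

private lemma lvl_lt {n : ℕ} (x : Cobweb (fun k => k) n) : Cobweb.lvl x < n := x.1.isLt

private lemma le_char {F : ℕ → ℕ} {n : ℕ} {x y : Cobweb F n} :
    x ≤ y ↔ x = y ∨ x.lvl < y.lvl := Iff.rfl

private lemma lt_char {F : ℕ → ℕ} {n : ℕ} {x y : Cobweb F n} :
    x < y ↔ x.lvl < y.lvl := by
  rw [lt_iff_le_not_ge, le_char, le_char]
  constructor
  · rintro ⟨rfl | h, h2⟩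
    · exact absurd (Or.inl rfl) h2
    · exact h
  · intro h
    refine ⟨Or.inr h, ?_⟩
    rintro (rfl | h')
    · exact lt_irrefl _ h
    · exact lt_irrefl _ (h.trans h')



private lemma key {n : ℕ} (mu : Cobweb (fun k => k) n → Cobweb (fun k => k) n → ℤ)
    (hrefl : ∀ x, mu x x = 1)
    (hrec : ∀ x y : Cobweb (fun k => k) n, x < y →
      mu x y = -∑ z ∈ Finset.univ.filter (fun z => x ≤ z ∧ z < y), mu x z) :
    ∀ s : ℕ, ∀ x y : Cobweb (fun k => k) n, x.lvl < y.lvl → y.lvl = s →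
      mu x y = gaux x.lvl y.lvl := by
  intro s
  induction s using Nat.strong_induction_on with
  | _ s ih =>
    intro x y hxy hys
    rw [hrec x y (lt_char.mpr hxy)]
    have hx_not : x ∉ Finset.univ.filter
        (fun z : Cobweb (fun k => k) n => x.lvl < z.lvl ∧ z.lvl < y.lvl) := by simp
    have hfilter : Finset.univ.filter (fun z => x ≤ z ∧ z < y)
        = insert x (Finset.univ.filter
          (fun z : Cobweb (fun k => k) n => x.lvl < z.lvl ∧ z.lvl < y.lvl)) := by
      ext z
      simp only [Finset.mem_filter, Finset.mem_univ, true_and, Finset.mem_insert, le_char, lt_char]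
      constructor
      · rintro ⟨(rfl | h1), h2⟩
        · exact Or.inl rfl
        · exact Or.inr ⟨h1, h2⟩
      · rintro (rfl | ⟨h1, h2⟩)
        · exact ⟨Or.inl rfl, hxy⟩
        · exact ⟨Or.inr h1, h2⟩
    rw [hfilter, Finset.sum_insert hx_not, hrefl]
    have hcong : ∑ z ∈ Finset.univ.filter
          (fun z : Cobweb (fun k => k) n => x.lvl < z.lvl ∧ z.lvl < y.lvl), mu x z
        = ∑ z ∈ Finset.univ.filter
          (fun z : Cobweb (fun k => k) n => x.lvl < z.lvl ∧ z.lvl < y.lvl), gaux x.lvl z.lvl := by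
      apply Finset.sum_congr rfl
      intro z hz
      simp only [Finset.mem_filter, Finset.mem_univ, true_and] at hz
      exact ih z.lvl (by omega) x z hz.1 rfl
    have hn : y.lvl < n := lvl_lt y
    have hgroup : ∑ z ∈ Finset.univ.filter
          (fun z : Cobweb (fun k => k) n => x.lvl < z.lvl ∧ z.lvl < y.lvl), gaux x.lvl z.lvl
        = ∑ t ∈ Finset.Ioo x.lvl y.lvl, (t:ℤ) * gaux x.lvl t := by
      rw [Finset.sum_filter]
      change (∑ a : (Σ k : Fin n, Fin (k:ℕ)), if x.lvl < (a.fst:ℕ) ∧ (a.fst:ℕ) < y.lvl then gaux x.lvl a.fst else 0) = _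
      rw [← Finset.univ_sigma_univ]
      erw [Finset.sum_sigma]
      simp only [Finset.sum_const, Finset.card_univ, Fintype.card_fin,
        nsmul_eq_mul, mul_ite, mul_zero]
      rw [Fin.sum_univ_eq_sum_range (fun k => if x.lvl < k ∧ k < y.lvl then (k:ℤ) * gaux x.lvl k else 0)]
      rw [← Finset.sum_filter]
      apply Finset.sum_congr _ (fun _ _ => rfl)
      ext k
      simp only [Finset.mem_Ioo, Finset.mem_filter, Finset.mem_range]
      omega
    rw [hcong, hgroup]
    exact (arith x.lvl y.lvl hxy).symm

/-- For the `N`-cobweb poset (level `k` has `k` elements, `k ≥ 1`), the Möbius function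
between an element of level `r ≥ 1` and an element of level `s > r + 1` equals
`(-1)^{s-r} ∏_{i=r+1}^{s-1} (i-1) = (-1)^{s-r} (s-2)!/(r-1)!`. -/
theorem stmt9 (n : ℕ)
    (mu : Cobweb (fun k => k) n → Cobweb (fun k => k) n → ℤ)
    (hrefl : ∀ x, mu x x = 1)
    (hrec : ∀ x y : Cobweb (fun k => k) n, x < y →
      mu x y = -∑ z ∈ Finset.univ.filter (fun z => x ≤ z ∧ z < y), mu x z) :
    ∀ x y : Cobweb (fun k => k) n, 1 ≤ x.lvl → x.lvl + 1 < y.lvl →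
      mu x y = (-1) ^ (y.lvl - x.lvl) * ∏ i ∈ Finset.Ioo x.lvl y.lvl, ((i : ℤ) - 1) ∧
      ((x.lvl - 1).factorial : ℤ) * mu x y =
        (-1) ^ (y.lvl - x.lvl) * ((y.lvl - 2).factorial : ℤ) := by
  intro x y hx1 hxy
  have h1 : mu x y = gaux x.lvl y.lvl := key mu hrefl hrec y.lvl x y (by omega) rfl
  refine ⟨h1, ?_⟩
  rw [h1]
  unfold gaux
  rw [mul_left_comm, fact_prod x.lvl hx1 y.lvl (by omega)]
end
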